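/- Fix ℓ ≥ 1 and let core(λ) = λ(0) ⊂ λ(1) ⊂ ⋯ ⊂ λ(N) = λ be a row-addition sequence for λ in right-to-left order with N ≥ 1, and let c be the content of the final node of the last strip λ(N)∖λ(N−1). Then for every integer j ≥ c with m(λ)(j) = −1 and every integer j′ > j with j′ ≡ j (mod ℓ), one has m(λ)(j′) = −1 (vertical propagation: every white bead strictly to the left of the last landing spot lies in the white sea of its quotient Maya diagram). -/

import Mathlib

/-- A partition: a weakly decreasing, eventually zero sequence of naturals;
`part k` is the `(k+1)`-st part `λ_{k+1}`. -/
structure YPartition where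
  part : ℕ → ℕ
  antitone : ∀ a b : ℕ, a ≤ b → part b ≤ part a
  eventually_zero : ∃ N, ∀ n, N ≤ n → part n = 0

namespace Wreath

attribute [local instance] Classical.propDecidable

/-- The conjugate partition: `conj lam a = ᵗλ_a` for `a ≥ 1`. -/
noncomputable def conj (lam : YPartition) (a : ℕ) : ℕ :=
  Set.ncard {k : ℕ | a ≤ lam.part k}

/-- The Maya diagram of a partition: value `+1` at `j` iff `j = ᵗλ_a − a` for some `a ≥ 1`. -/
noncomputable def mayaFun (lam : YPartition) : ℤ → ℤ := fun j =>
  if ∃ a : ℕ, j = (conj lam (a + 1) : ℤ) - (a + 1 : ℤ) then 1 else -1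

/-- `f : ℤ → ℤ` is a Maya diagram: values `±1`, eventually `-1` to the right (large `j`),
eventually `+1` to the left (small `j`). -/
def IsMayaFun (f : ℤ → ℤ) : Prop :=
  (∀ j, f j = 1 ∨ f j = -1) ∧ (∃ N : ℤ, ∀ j, N ≤ j → f j = -1) ∧
    (∃ N : ℤ, ∀ j, j ≤ N → f j = 1)

/-- The charge `#{j < 0 : f j = −1} − #{j ≥ 0 : f j = 1}`. -/
noncomputable def chargeFun (f : ℤ → ℤ) : ℤ :=
  (Set.ncard {j : ℤ | j < 0 ∧ f j = -1} : ℤ) - (Set.ncard {j : ℤ | 0 ≤ j ∧ f j = 1} : ℤ)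

def emptyPartition : YPartition :=
  ⟨fun _ => 0, fun _ _ _ => le_rfl, ⟨0, fun _ _ => rfl⟩⟩

/-- The partition whose Maya diagram is `f` (junk value if there is none). -/
noncomputable def partitionOfMaya (f : ℤ → ℤ) : YPartition :=
  if h : ∃ lam : YPartition, mayaFun lam = f then h.choose else emptyPartition

/-- The charge `c_i(λ)` of the `i`-th quotient Maya diagram `j ↦ m(λ)(i + jℓ)`. -/
noncomputable def chargeQuot (ℓ : ℕ) (lam : YPartition) (i : ℤ) : ℤ :=
  chargeFun fun j => mayaFun lam (i + j * (ℓ : ℤ))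

/-- The `i`-th quotient component `λ^i`: the partition whose Maya diagram is
`j ↦ m_i(λ)(j − c_i(λ))`. -/
noncomputable def quotComp (ℓ : ℕ) (lam : YPartition) (i : ℤ) : YPartition :=
  partitionOfMaya fun j => mayaFun lam (i + (j - chargeQuot ℓ lam i) * (ℓ : ℤ))

/-- The `ℓ`-core of `λ`: the partition whose Maya diagram has value `−1` at `i + jℓ`
(`0 ≤ i < ℓ`) exactly when `j ≥ −c_i(λ)`. -/
noncomputable def coreOf (ℓ : ℕ) (lam : YPartition) : YPartition :=
  partitionOfMaya fun j =>
    if -(chargeQuot ℓ lam (Int.emod j (ℓ : ℤ))) ≤ Int.ediv j (ℓ : ℤ) then -1 else 1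

/-- Membership of the node `x = (a,b)` in the Young diagram of `lam`:
`1 ≤ a`, `1 ≤ b`, `a ≤ λ_b`.  The content of `(a,b)` is `b − a`. -/
def Partition.memYD (lam : YPartition) (x : ℤ × ℤ) : Prop :=
  1 ≤ x.1 ∧ 1 ≤ x.2 ∧ x.1 ≤ (lam.part (x.2 - 1).toNat : ℤ)

/-- Containment of Young diagrams. -/
def Sub (lam mu : YPartition) : Prop := ∀ x, Partition.memYD lam x → Partition.memYD mu x

/-- Membership in the skew diagram `μ∖λ`. -/
def SkewMem (lam mu : YPartition) (x : ℤ × ℤ) : Prop :=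
  Partition.memYD mu x ∧ ¬ Partition.memYD lam x

/-- The number of nodes of `μ∖λ`. -/
noncomputable def skewSize (lam mu : YPartition) : ℕ := Set.ncard {x | SkewMem lam mu x}

/-- The size `|λ|`. -/
noncomputable def Partition.size (lam : YPartition) : ℕ := Set.ncard {x | Partition.memYD lam x}

/-- Edge-adjacency of nodes. -/
def adjacent (x y : ℤ × ℤ) : Prop :=
  (x.1 = y.1 ∧ (x.2 = y.2 + 1 ∨ y.2 = x.2 + 1)) ∨
  (x.2 = y.2 ∧ (x.1 = y.1 + 1 ∨ y.1 = x.1 + 1))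

/-- `μ∖λ` is a border strip: `λ ⊆ μ`, nonempty, connected through edge-adjacent nodes,
and containing no 2×2 block. -/
def IsBorderStrip (lam mu : YPartition) : Prop :=
  Sub lam mu ∧ (∃ x, SkewMem lam mu x) ∧
  (∀ x y, SkewMem lam mu x → SkewMem lam mu y →
    Relation.ReflTransGen (fun u v => SkewMem lam mu u ∧ SkewMem lam mu v ∧ adjacent u v) x y) ∧
  ¬ ∃ a b : ℤ, SkewMem lam mu (a, b) ∧ SkewMem lam mu (a + 1, b) ∧
      SkewMem lam mu (a, b + 1) ∧ SkewMem lam mu (a + 1, b + 1)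

/-- An `ℓ`-core: a partition from which no border strip of `ℓ` nodes can be removed. -/
def IsCore (ℓ : ℕ) (lam : YPartition) : Prop :=
  ¬ ∃ mu : YPartition, IsBorderStrip mu lam ∧ skewSize mu lam = ℓ

/-- Dominance order (on partitions of the same size): `Dom μ λ` means `μ ⊴ λ`. -/
def Dom (mu lam : YPartition) : Prop :=
  Partition.size mu = Partition.size lam ∧
  ∀ k : ℕ, ∑ b ∈ Finset.range k, mu.part b ≤ ∑ b ∈ Finset.range k, lam.part b

/-- `x` is the node of `μ∖λ` of largest content (the initial node of a strip). -/
def IsMaxContentNode (lam mu : YPartition) (x : ℤ × ℤ) : Prop :=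
  SkewMem lam mu x ∧ ∀ y, SkewMem lam mu y → y.2 - y.1 ≤ x.2 - x.1

/-- `x` is the node of `μ∖λ` of smallest content (the final node of a strip). -/
def IsMinContentNode (lam mu : YPartition) (x : ℤ × ℤ) : Prop :=
  SkewMem lam mu x ∧ ∀ y, SkewMem lam mu y → x.2 - x.1 ≤ y.2 - y.1

/-- Add `1` to each of the first `k` parts (append a column of height `k`). -/
def addColParts (k : ℕ) (f : ℕ → ℕ) : ℕ → ℕ := fun r => if r < k then f r + 1 else f r

/-- The number of (nonzero) rows of a partition. -/
noncomputable def numRows (nu : YPartition) : ℕ := Set.ncard {r : ℕ | 0 < nu.part r}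

/-- Append a new final row of length `k` after `len` rows. -/
def addRowParts (k len : ℕ) (f : ℕ → ℕ) : ℕ → ℕ :=
  fun r => if r < len then f r else if r = len then k else 0

/-- One column-addition step: `μ` is obtained from `ν` by adding, in component `i` of the
`ℓ`-quotient, a new column of height `k` no taller than any existing column. -/
def IsColStep (ℓ : ℕ) (nu mu : YPartition) (i k : ℕ) : Prop :=
  i < ℓ ∧ 1 ≤ k ∧
  (∀ a : ℕ, 1 ≤ a → (a : ℕ) ≤ (quotComp ℓ nu (i : ℤ)).part 0 →
    k ≤ conj (quotComp ℓ nu (i : ℤ)) a) ∧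
  coreOf ℓ mu = coreOf ℓ nu ∧
  (∀ i' : ℕ, i' < ℓ → i' ≠ i → quotComp ℓ mu (i' : ℤ) = quotComp ℓ nu (i' : ℤ)) ∧
  (quotComp ℓ mu (i : ℤ)).part = addColParts k ((quotComp ℓ nu (i : ℤ)).part)

/-- One row-addition step: `μ` is obtained from `ν` by adding, in component `i` of the
`ℓ`-quotient, a new final row of length `k` no longer than any existing row. -/
def IsRowStep (ℓ : ℕ) (nu mu : YPartition) (i k : ℕ) : Prop :=
  i < ℓ ∧ 1 ≤ k ∧
  (∀ r : ℕ, 0 < (quotComp ℓ nu (i : ℤ)).part r → k ≤ (quotComp ℓ nu (i : ℤ)).part r) ∧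
  coreOf ℓ mu = coreOf ℓ nu ∧
  (∀ i' : ℕ, i' < ℓ → i' ≠ i → quotComp ℓ mu (i' : ℤ) = quotComp ℓ nu (i' : ℤ)) ∧
  (quotComp ℓ mu (i : ℤ)).part =
    addRowParts k (numRows (quotComp ℓ nu (i : ℤ))) ((quotComp ℓ nu (i : ℤ)).part)

/-- A column-addition sequence for `λ`. -/
def IsColSeq (ℓ : ℕ) (lam : YPartition) (N : ℕ) (seq : ℕ → YPartition) : Prop :=
  seq 0 = coreOf ℓ lam ∧ seq N = lam ∧
  ∀ t, t < N → ∃ i k, IsColStep ℓ (seq t) (seq (t + 1)) i k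

/-- A row-addition sequence for `λ`. -/
def IsRowSeq (ℓ : ℕ) (lam : YPartition) (N : ℕ) (seq : ℕ → YPartition) : Prop :=
  seq 0 = coreOf ℓ lam ∧ seq N = lam ∧
  ∀ t, t < N → ∃ i k, IsRowStep ℓ (seq t) (seq (t + 1)) i k

/-- Left-to-right order on a column-addition sequence: for `1 ≤ r < s ≤ N` the content of the
initial node of the `r`-th strip is strictly greater than the content of the final node of the
`s`-th strip. -/
def LeftToRight (N : ℕ) (seq : ℕ → YPartition) : Prop :=
  ∀ r s, 1 ≤ r → r < s → s ≤ N → ∀ x y,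
    IsMaxContentNode (seq (r - 1)) (seq r) x →
    IsMinContentNode (seq (s - 1)) (seq s) y →
    y.2 - y.1 < x.2 - x.1

/-- Right-to-left order on a row-addition sequence: for `1 ≤ r < s ≤ N` the content of the
final node of the `r`-th strip is strictly less than the content of the final node of the
`s`-th strip. -/
def RightToLeft (N : ℕ) (seq : ℕ → YPartition) : Prop :=
  ∀ r s, 1 ≤ r → r < s → s ≤ N → ∀ x y,
    IsMinContentNode (seq (r - 1)) (seq r) x →
    IsMinContentNode (seq (s - 1)) (seq s) y →
    x.2 - x.1 < y.2 - y.1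

/-- `x` is an addable node of `λ`. -/
def Addable (lam : YPartition) (x : ℤ × ℤ) : Prop :=
  ¬ Partition.memYD lam x ∧
    ∃ mu : YPartition, ∀ y, Partition.memYD mu y ↔ (Partition.memYD lam y ∨ y = x)

/-- `x` is a removable node of `λ`. -/
def Removable (lam : YPartition) (x : ℤ × ℤ) : Prop :=
  Partition.memYD lam x ∧
    ∃ mu : YPartition, ∀ y, Partition.memYD mu y ↔ (Partition.memYD lam y ∧ y ≠ x)

end Wreath

open Wreath

/-!
Call `j < j'` with `j ≡ j' (mod ℓ)`, `m(j) = -1` and `m(j') = 1` an inversion of the Maya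
diagram `m`. The Maya diagram of an `ℓ`-core has none: each of its residue classes is a shifted
vacuum. A row-addition step moves a `-1` of one residue class from `p + kℓ` down to `p`, and
`p + 1` is the content of the final node of the added strip; because the new row of the quotient
is no longer than the others, the positions `p + mℓ` with `0 < m < k` carry `+1` before the step.
Hence every inversion after the step either has `j ≤ p` or was already present before it. Along a
right-to-left sequence the contents `p + 1` increase, so by induction every inversion `(j, j')` of
`m(λ)` has `j < c`.

Quotient components and cores are defined through `partitionOfMaya`, so reading off their Maya
diagrams requires that every Maya diagram of charge `0` is that of a partition, and that the
quotient charges of `λ` sum to `0`.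
-/

lemma IsLowerSet.mem_iff_lt_ncard {S : Set ℕ} (hS : IsLowerSet S) (hfin : S.Finite) (k : ℕ) :
    k ∈ S ↔ k < S.ncard := by
  refine ⟨fun hk => ?_, fun hk => by_contra fun hkS => ?_⟩
  · calc k < (Set.Iio (k + 1)).ncard := by simp
      _ ≤ S.ncard := Set.ncard_le_ncard (fun _ hm => hS (Nat.lt_succ_iff.mp hm) hk) hfin
  · have hsub : S ⊆ Set.Iio k := fun _ hm => lt_of_not_ge fun hkm => hkS (hS hkm hm)
    have := Set.ncard_le_ncard hsub (Set.finite_Iio k)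
    simp only [Set.ncard_Iio_nat] at this
    omega

lemma StrictMono.monotone_sub_natCast {d : ℕ → ℤ} (hd : StrictMono d) :
    Monotone fun b => d b - b :=
  monotone_nat_of_le_succ fun n => by
    have := hd n.lt_add_one
    push_cast
    omega

lemma Set.Infinite.exists_strictMono_range_eq {H : Set ℤ} (hinf : H.Infinite)
    (hbdd : BddBelow H) : ∃ d : ℕ → ℤ, StrictMono d ∧ Set.range d = H := by
  obtain ⟨A, hA⟩ := hbdd
  have hcoe : ∀ j ∈ H, A + ((j - A).toNat : ℤ) = j := fun j hj => by
    have := hA hj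
    omega
  have hH : (fun n : ℕ => A + n) '' {n | A + n ∈ H} = H := by
    ext j
    refine ⟨fun ⟨n, hn, hj⟩ => hj ▸ hn, fun hj => ⟨(j - A).toNat, ?_, hcoe j hj⟩⟩
    simpa only [Set.mem_ofPred_eq, hcoe j hj] using hj
  have hP : {n : ℕ | A + n ∈ H}.Infinite := fun hfin =>
    hinf (hH ▸ hfin.image fun n : ℕ => A + n)
  refine ⟨fun b => A + Nat.nth (fun n => A + n ∈ H) b,
    fun a b h => by simpa using Nat.nth_strictMono hP h, ?_⟩
  rw [Set.range_comp' (fun n : ℕ => A + n), Nat.range_nth_of_infinite hP, hH]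

namespace Wreath

section MayaDiagram

lemma lt_conj_iff (lam : YPartition) {a : ℕ} (ha : 1 ≤ a) (k : ℕ) :
    k < conj lam a ↔ a ≤ lam.part k := by
  obtain ⟨N, hN⟩ := lam.eventually_zero
  have hfin : {k | a ≤ lam.part k}.Finite :=
    (Set.finite_Iio N).subset fun m hm => lt_of_not_ge fun h => by
      have := hN m h
      simp only [Set.mem_ofPred_eq] at hm
      omega
  exact (IsLowerSet.mem_iff_lt_ncard (fun _ _ h hm => le_trans hm (lam.antitone _ _ h))
    hfin k).symm

lemma conj_antitone (lam : YPartition) {a a' : ℕ} (ha : 1 ≤ a) (h : a ≤ a') :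
    conj lam a' ≤ conj lam a :=
  le_of_forall_lt fun k hk => (lt_conj_iff lam ha k).mpr
    (h.trans ((lt_conj_iff lam (ha.trans h) k).mp hk))

lemma lt_numRows_iff (lam : YPartition) (b : ℕ) : b < numRows lam ↔ 0 < lam.part b := by
  obtain ⟨N, hN⟩ := lam.eventually_zero
  exact (IsLowerSet.mem_iff_lt_ncard (S := {b | 0 < lam.part b})
    (fun _ _ h hb => lt_of_lt_of_le hb (lam.antitone _ _ h))
    ((Set.finite_Iio N).subset fun b hb => lt_of_not_ge fun h => hb.ne' (hN b h)) b).symm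

/-- The positions of the `-1`'s of `mayaFun lam`, in increasing order. -/
def hole (lam : YPartition) (b : ℕ) : ℤ := b - lam.part b

lemma strictMono_hole (lam : YPartition) : StrictMono (hole lam) := fun b b' h => by
  have := lam.antitone b b' h.le
  simp only [hole]
  omega

lemma hole_ne_conj_sub (lam : YPartition) (a b : ℕ) :
    hole lam b ≠ conj lam (a + 1) - (a + 1 : ℤ) := by
  have h := lt_conj_iff lam (Nat.le_add_left 1 a) b
  simp only [hole]
  rcases lt_or_ge b (conj lam (a + 1)) with hb | hb
  · have := h.mp hb
    omega
  · have := mt h.mpr (not_lt.mpr hb)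
    omega

lemma exists_conj_sub_eq (lam : YPartition) {j : ℤ} (hj : j ∉ Set.range (hole lam)) :
    ∃ a : ℕ, j = conj lam (a + 1) - (a + 1 : ℤ) := by
  classical
  have hex : ∃ b : ℕ, j < hole lam b := ⟨(j + lam.part 0 + 1).toNat, by
    have := lam.antitone 0 (j + lam.part 0 + 1).toNat (Nat.zero_le _)
    simp only [hole]
    omega⟩
  set b := Nat.find hex
  have hjb : j < hole lam b := Nat.find_spec hex
  have hbj : ∀ m < b, hole lam m < j := fun m hm =>
    lt_of_le_of_ne (not_lt.mp (Nat.find_min hex hm)) fun h => hj ⟨m, h⟩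
  simp only [hole] at hjb hbj
  refine ⟨(b - 1 - j).toNat, ?_⟩
  have hconj : conj lam ((b - 1 - j).toNat + 1) = b := by
    refine eq_of_forall_lt_iff fun m => ?_
    rw [lt_conj_iff lam (by omega)]
    constructor
    · intro hm
      by_contra hbm
      have := lam.antitone b m (not_lt.mp hbm)
      omega
    · intro hm
      have h1 := hbj (b - 1) (by omega)
      have h2 := lam.antitone m (b - 1) (by omega)
      omega
  rw [hconj]
  omega

lemma mayaFun_eq_neg_one_iff (lam : YPartition) (j : ℤ) :
    mayaFun lam j = -1 ↔ j ∈ Set.range (hole lam) := by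
  unfold mayaFun
  split_ifs with h
  · obtain ⟨a, rfl⟩ := h
    simp only [Set.mem_range, false_iff, not_exists]
    exact fun b => hole_ne_conj_sub lam a b
  · exact iff_of_true rfl (by_contra fun hj => h (exists_conj_sub_eq lam hj))

lemma mayaFun_eq_one_or_neg_one (lam : YPartition) (j : ℤ) :
    mayaFun lam j = 1 ∨ mayaFun lam j = -1 := by
  unfold mayaFun
  split_ifs <;> simp

lemma mayaFun_eq_one_iff (lam : YPartition) (j : ℤ) :
    mayaFun lam j = 1 ↔ j ∉ Set.range (hole lam) := by
  rw [← mayaFun_eq_neg_one_iff]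
  rcases mayaFun_eq_one_or_neg_one lam j with h | h <;> simp [h]

lemma mayaFun_eq_of_mem_range_hole_iff {mu nu : YPartition} {s t : ℤ}
    (h : s ∈ Set.range (hole mu) ↔ t ∈ Set.range (hole nu)) : mayaFun mu s = mayaFun nu t := by
  by_cases hs : s ∈ Set.range (hole mu)
  · rw [(mayaFun_eq_neg_one_iff mu s).mpr hs, (mayaFun_eq_neg_one_iff nu t).mpr (h.mp hs)]
  · rw [(mayaFun_eq_one_iff mu s).mpr hs, (mayaFun_eq_one_iff nu t).mpr (mt h.mpr hs)]

lemma isMayaFun_mayaFun (lam : YPartition) : IsMayaFun (mayaFun lam) := by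
  obtain ⟨N, hN⟩ := lam.eventually_zero
  refine ⟨mayaFun_eq_one_or_neg_one lam, ⟨N, fun j hj => ?_⟩, ⟨-lam.part 0 - 1, fun j hj => ?_⟩⟩
  · refine (mayaFun_eq_neg_one_iff lam j).mpr ⟨j.toNat, ?_⟩
    rw [hole, hN _ (by omega)]
    omega
  · refine (mayaFun_eq_one_iff lam j).mpr fun ⟨b, hb⟩ => ?_
    have := lam.antitone 0 b (Nat.zero_le b)
    simp only [hole] at hb
    omega

end MayaDiagram

section Charge

noncomputable def negCnt (f : ℤ → ℤ) (T : ℤ) : ℕ := {j | j < T ∧ f j = -1}.ncard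

noncomputable def posCnt (f : ℤ → ℤ) (T : ℤ) : ℕ := {j | T ≤ j ∧ f j = 1}.ncard

namespace IsMayaFun

variable {f : ℤ → ℤ}

lemma finite_neg (hf : IsMayaFun f) (T : ℤ) : {j | j < T ∧ f j = -1}.Finite := by
  obtain ⟨-, -, A, hA⟩ := hf
  refine (Set.finite_Ioo A T).subset fun j ⟨hjT, hj⟩ => ⟨lt_of_not_ge fun hjA => ?_, hjT⟩
  have := hA j hjA
  omega

lemma finite_pos (hf : IsMayaFun f) (T : ℤ) : {j | T ≤ j ∧ f j = 1}.Finite := by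
  obtain ⟨-, ⟨B, hB⟩, -⟩ := hf
  refine (Set.finite_Ico T B).subset fun j ⟨hTj, hj⟩ => ⟨hTj, lt_of_not_ge fun hjB => ?_⟩
  have := hB j hjB
  omega

lemma bddBelow_neg (hf : IsMayaFun f) : BddBelow {j | f j = -1} := by
  obtain ⟨-, -, A, hA⟩ := hf
  refine ⟨A, fun j (hj : f j = -1) => le_of_lt (lt_of_not_ge fun hjA => ?_)⟩
  have := hA j hjA
  omega

lemma infinite_neg (hf : IsMayaFun f) : {j | f j = -1}.Infinite := by
  obtain ⟨-, ⟨B, hB⟩, -⟩ := hf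
  exact (Set.Ici_infinite B).mono fun j hj => hB j hj

lemma negCnt_sub_posCnt_add_one (hf : IsMayaFun f) (T : ℤ) :
    (negCnt f (T + 1) : ℤ) - posCnt f (T + 1) = (negCnt f T : ℤ) - posCnt f T + 1 := by
  unfold negCnt posCnt
  rcases hf.1 T with hT | hT
  · have hneg : {j | j < T + 1 ∧ f j = -1} = {j | j < T ∧ f j = -1} := by
      ext j
      simp only [Set.mem_ofPred_eq]
      grind
    have hpos : {j | T ≤ j ∧ f j = 1} = insert T {j | T + 1 ≤ j ∧ f j = 1} := by
      ext j
      simp only [Set.mem_ofPred_eq, Set.mem_insert_iff]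
      grind
    rw [hneg, hpos, Set.ncard_insert_of_notMem (by simp) (hf.finite_pos _)]
    push_cast
    ring
  · have hneg : {j | j < T + 1 ∧ f j = -1} = insert T {j | j < T ∧ f j = -1} := by
      ext j
      simp only [Set.mem_ofPred_eq, Set.mem_insert_iff]
      grind
    have hpos : {j | T + 1 ≤ j ∧ f j = 1} = {j | T ≤ j ∧ f j = 1} := by
      ext j
      simp only [Set.mem_ofPred_eq]
      grind
    rw [hneg, hpos, Set.ncard_insert_of_notMem (by simp) (hf.finite_neg _)]
    push_cast
    ring

lemma negCnt_sub_posCnt (hf : IsMayaFun f) (T : ℤ) :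
    (negCnt f T : ℤ) - posCnt f T = chargeFun f + T := by
  induction T using Int.induction_on with
  | zero => simp [negCnt, posCnt, chargeFun]
  | succ T ih => rw [hf.negCnt_sub_posCnt_add_one, ih]; ring
  | pred T ih =>
    have := hf.negCnt_sub_posCnt_add_one (-T - 1)
    rw [sub_add_cancel] at this
    omega

lemma comp_sub (hf : IsMayaFun f) (c : ℤ) : IsMayaFun fun j => f (j - c) := by
  obtain ⟨hv, ⟨B, hB⟩, ⟨A, hA⟩⟩ := hf
  exact ⟨fun j => hv _, ⟨B + c, fun j hj => hB _ (by omega)⟩,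
    ⟨A + c, fun j hj => hA _ (by omega)⟩⟩

lemma chargeFun_comp_sub (hf : IsMayaFun f) (c : ℤ) :
    chargeFun (fun j => f (j - c)) = chargeFun f - c := by
  have hcard : ∀ (P : ℤ → Prop) (v : ℤ),
      {j | P j ∧ f (j - c) = v}.ncard = {j | P (j + c) ∧ f j = v}.ncard := fun P v => by
    rw [← Set.ncard_image_of_injective {j | P (j + c) ∧ f j = v} (add_left_injective c)]
    congr 1
    ext j
    simp [Set.image_add_right, sub_eq_add_neg]
  have hcut := hf.negCnt_sub_posCnt (-c)
  rw [chargeFun, hcard, hcard]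
  simp only [negCnt, posCnt, ← lt_neg_iff_add_neg, ← neg_le_iff_add_nonneg] at hcut ⊢
  omega

end IsMayaFun

lemma lt_negCnt_iff {f : ℤ → ℤ} {d : ℕ → ℤ} (hd : StrictMono d)
    (hf : ∀ j, f j = -1 ↔ j ∈ Set.range d) (T : ℤ) (b : ℕ) :
    b < negCnt f T ↔ d b < T := by
  have hset : {j | j < T ∧ f j = -1} = d '' {b | d b < T} := by
    ext j
    simp only [Set.mem_ofPred_eq, hf, Set.mem_range, Set.mem_image]
    grind
  have hlower : IsLowerSet {b | d b < T} := fun _ _ h hb => lt_of_le_of_lt (hd.monotone h) hb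
  have hfin : {b | d b < T}.Finite :=
    (Set.finite_Iio (T - d 0).toNat).subset fun b (hb : d b < T) => by
      have := hd.monotone_sub_natCast (Nat.zero_le b)
      simp only [Set.mem_Iio]
      push_cast at this
      omega
  rw [negCnt, hset, Set.ncard_image_of_injective _ hd.injective, ← hlower.mem_iff_lt_ncard hfin]
  rfl

lemma chargeFun_mayaFun (lam : YPartition) : chargeFun (mayaFun lam) = 0 := by
  have hneg : {j | j < 0 ∧ mayaFun lam j = -1} = hole lam '' {b | b < lam.part b} := by
    ext j
    simp only [Set.mem_ofPred_eq, mayaFun_eq_neg_one_iff, Set.mem_range, Set.mem_image, hole]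
    grind
  have hpos : {j | 0 ≤ j ∧ mayaFun lam j = 1} =
      (fun a : ℕ => conj lam (a + 1) - (a + 1 : ℤ)) '' {b | b < lam.part b} := by
    ext j
    simp only [Set.mem_ofPred_eq, Set.mem_image, mayaFun]
    constructor
    · rintro ⟨hj, hm⟩
      split_ifs at hm with h
      obtain ⟨a, rfl⟩ := h
      exact ⟨a, (lt_conj_iff lam (a := a + 1) (by omega) a).mp (by omega), rfl⟩
    · rintro ⟨a, ha, rfl⟩
      have := (lt_conj_iff lam (Nat.le_add_left 1 a) a).mpr ha
      exact ⟨by omega, if_pos ⟨a, rfl⟩⟩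
  have hbead : StrictAnti fun a : ℕ => conj lam (a + 1) - (a + 1 : ℤ) := fun a a' h => by
    have := conj_antitone lam (a := a + 1) (a' := a' + 1) (by omega) (by omega)
    simp only
    omega
  rw [chargeFun, hneg, hpos, Set.ncard_image_of_injective _ (strictMono_hole lam).injective,
    Set.ncard_image_of_injective _ hbead.injective, sub_self]

lemma exists_mayaFun_eq {f : ℤ → ℤ} (hf : IsMayaFun f) (hc : chargeFun f = 0) :
    ∃ lam : YPartition, mayaFun lam = f := by
  obtain ⟨d, hd, hrange⟩ := hf.infinite_neg.exists_strictMono_range_eq hf.bddBelow_neg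
  have hd' : ∀ j, f j = -1 ↔ j ∈ Set.range d := fun j => by rw [hrange]; rfl
  have hcut := hf.negCnt_sub_posCnt
  rw [hc] at hcut
  have hle : ∀ b : ℕ, d b ≤ b := fun b => by
    have := (lt_negCnt_iff hd hd' (b + 1) b).mp (by have := hcut (b + 1); omega)
    omega
  obtain ⟨B, hB⟩ := hf.2.1
  have hge : ∀ b : ℕ, B ≤ b → b ≤ d b := fun b hb => by
    have hpos : posCnt f b = 0 := by
      rw [posCnt, Set.ncard_eq_zero (hf.finite_pos b)]
      ext j
      simp only [Set.mem_ofPred_eq, Set.mem_empty_iff_false, iff_false, not_and]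
      intro hj
      simp [hB j (hb.trans hj)]
    have := mt (lt_negCnt_iff hd hd' b b).mpr (by have := hcut b; omega)
    omega
  let lam : YPartition := ⟨fun b => (b - d b).toNat, fun a b h => by
    have : d a - a ≤ d b - b := hd.monotone_sub_natCast h
    omega, ⟨B.toNat, fun b hb => by have := hge b (by omega); omega⟩⟩
  have hhole : hole lam = d := funext fun b => by
    have := hle b
    simp only [hole, lam]
    omega
  refine ⟨lam, funext fun j => ?_⟩
  rcases hf.1 j with hj | hj
  · rw [hj, mayaFun_eq_one_iff, hhole, ← hd', hj]
    decide
  · rwa [hj, mayaFun_eq_neg_one_iff, hhole, ← hd']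

lemma mayaFun_partitionOfMaya {f : ℤ → ℤ} (hf : IsMayaFun f) (hc : chargeFun f = 0) :
    mayaFun (partitionOfMaya f) = f := by
  have h := exists_mayaFun_eq hf hc
  rw [partitionOfMaya, dif_pos h]
  exact h.choose_spec

lemma chargeFun_step (c : ℤ) : chargeFun (fun t => if c ≤ t then (-1 : ℤ) else 1) = -c := by
  have hneg : {t : ℤ | t < 0 ∧ (if c ≤ t then (-1 : ℤ) else 1) = -1} = Set.Ico c 0 := by
    ext t
    simp only [Set.mem_ofPred_eq, Set.mem_Ico]
    split_ifs <;> simp [*]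
  have hpos : {t : ℤ | 0 ≤ t ∧ (if c ≤ t then (-1 : ℤ) else 1) = 1} = Set.Ico 0 c := by
    ext t
    simp only [Set.mem_ofPred_eq, Set.mem_Ico]
    split_ifs <;> simp [*]
    omega
  rw [chargeFun, hneg, hpos, ← Finset.coe_Ico, ← Finset.coe_Ico, Set.ncard_coe_finset,
    Set.ncard_coe_finset, Int.card_Ico, Int.card_Ico]
  omega

end Charge

section Residues

variable {ℓ : ℕ}

lemma exists_eq_add_mul (hℓ : 1 ≤ ℓ) (j : ℤ) : ∃ i < ℓ, ∃ t : ℤ, j = i + t * ℓ := by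
  refine ⟨(j % ℓ).toNat, ?_, j / ℓ, ?_⟩
  · have := Int.emod_lt_of_pos j (by omega : (0 : ℤ) < ℓ)
    omega
  · have := Int.emod_nonneg j (by omega : (ℓ : ℤ) ≠ 0)
    have := Int.emod_add_mul_ediv j ℓ
    rw [Int.toNat_of_nonneg (by omega), mul_comm]
    omega

lemma add_mul_emod {i : ℕ} (hi : i < ℓ) (t : ℤ) : ((i : ℤ) + t * ℓ) % ℓ = i := by
  rw [Int.add_mul_emod_self_right, Int.emod_eq_of_lt (by omega) (by omega)]

lemma add_mul_ediv {i : ℕ} (hi : i < ℓ) (t : ℤ) : ((i : ℤ) + t * ℓ) / ℓ = t := by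
  rw [Int.add_mul_ediv_right _ _ (by omega), Int.ediv_eq_zero_of_lt (by omega) (by omega),
    zero_add]

lemma add_mul_neg_iff {i : ℕ} (hi : i < ℓ) (t : ℤ) : (i : ℤ) + t * ℓ < 0 ↔ t < 0 := by
  constructor <;> intro h
  · by_contra! ht
    nlinarith
  · nlinarith

lemma ncard_eq_sum_ncard_preimage (hℓ : 1 ≤ ℓ) {X : Set ℤ} (hX : X.Finite) :
    X.ncard = ∑ i ∈ Finset.range ℓ, ((fun t : ℤ => (i : ℤ) + t * ℓ) ⁻¹' X).ncard := by
  classical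
  have hmaps : ∀ j ∈ hX.toFinset, (j % ℓ).toNat ∈ Finset.range ℓ := fun j _ => by
    have := Int.emod_lt_of_pos j (by omega : (0 : ℤ) < ℓ)
    simp only [Finset.mem_range]
    omega
  rw [Set.ncard_eq_toFinset_card X hX, Finset.card_eq_sum_card_fiberwise hmaps]
  refine Finset.sum_congr rfl fun i hi => ?_
  have hi : i < ℓ := Finset.mem_range.mp hi
  have hpre : (fun t : ℤ => (i : ℤ) + t * ℓ) ⁻¹' X = (fun t : ℤ => (i : ℤ) + t * ℓ) ⁻¹'
      ↑(hX.toFinset.filter fun j : ℤ => (j % (ℓ : ℤ)).toNat = i) := by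
    ext t
    simp [add_mul_emod hi]
  have hinj : Function.Injective fun t : ℤ => (i : ℤ) + t * ℓ := fun s t h => by
    simpa [add_mul_ediv hi] using congrArg (· / (ℓ : ℤ)) h
  rw [hpre, Set.ncard_preimage_of_injective_subset_range hinj, Set.ncard_coe_finset]
  intro j hj
  simp only [Finset.coe_filter, Set.mem_ofPred_eq] at hj
  have := Int.emod_nonneg j (by omega : (ℓ : ℤ) ≠ 0)
  have := Int.emod_add_mul_ediv j ℓ
  rw [mul_comm] at this
  exact ⟨j / ℓ, by simp only; omega⟩

lemma IsMayaFun.comp_add_mul {f : ℤ → ℤ} (hf : IsMayaFun f) (hℓ : 1 ≤ ℓ) (i : ℤ) :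
    IsMayaFun fun t => f (i + t * ℓ) := by
  obtain ⟨hv, ⟨B, hB⟩, ⟨A, hA⟩⟩ := hf
  have hℓ' : (1 : ℤ) ≤ ℓ := by exact_mod_cast hℓ
  refine ⟨fun t => hv _, ⟨max 0 (B - i), fun t ht => hB _ ?_⟩,
    ⟨min 0 (A - i), fun t ht => hA _ ?_⟩⟩
  · nlinarith [le_max_left 0 (B - i), le_max_right 0 (B - i)]
  · nlinarith [min_le_left 0 (A - i), min_le_right 0 (A - i)]

lemma IsMayaFun.chargeFun_eq_sum {f : ℤ → ℤ} (hf : IsMayaFun f) (hℓ : 1 ≤ ℓ) :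
    chargeFun f = ∑ i ∈ Finset.range ℓ, chargeFun fun t => f (i + t * ℓ) := by
  rw [chargeFun, ncard_eq_sum_ncard_preimage hℓ (hf.finite_neg 0),
    ncard_eq_sum_ncard_preimage hℓ (hf.finite_pos 0)]
  push_cast
  rw [← Finset.sum_sub_distrib]
  refine Finset.sum_congr rfl fun i hi => ?_
  have hi : i < ℓ := Finset.mem_range.mp hi
  simp only [chargeFun, Set.preimage_ofPred_eq, add_mul_neg_iff hi, ← not_lt]

end Residues

section Quotient

variable {ℓ : ℕ}

lemma sum_chargeQuot (hℓ : 1 ≤ ℓ) (lam : YPartition) :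
    ∑ i ∈ Finset.range ℓ, chargeQuot ℓ lam i = 0 := by
  rw [← chargeFun_mayaFun lam, (isMayaFun_mayaFun lam).chargeFun_eq_sum hℓ]
  rfl

lemma mayaFun_quotComp (hℓ : 1 ≤ ℓ) (lam : YPartition) (i : ℤ) :
    mayaFun (quotComp ℓ lam i) = fun t => mayaFun lam (i + (t - chargeQuot ℓ lam i) * ℓ) := by
  have hq := (isMayaFun_mayaFun lam).comp_add_mul hℓ i
  exact mayaFun_partitionOfMaya (hq.comp_sub _) (by rw [hq.chargeFun_comp_sub]; exact sub_self _)

lemma mayaFun_add_mul (hℓ : 1 ≤ ℓ) (lam : YPartition) (i t : ℤ) :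
    mayaFun lam (i + t * ℓ) = mayaFun (quotComp ℓ lam i) (t + chargeQuot ℓ lam i) := by
  simp only [mayaFun_quotComp hℓ, add_sub_cancel_right]

end Quotient

section Core

variable {ℓ : ℕ}

noncomputable def coreMaya (ℓ : ℕ) (lam : YPartition) : ℤ → ℤ := fun j =>
  if -(chargeQuot ℓ lam (Int.emod j (ℓ : ℤ))) ≤ Int.ediv j (ℓ : ℤ) then -1 else 1

lemma coreMaya_add_mul (lam : YPartition) {i : ℕ} (hi : i < ℓ) (t : ℤ) :
    coreMaya ℓ lam (i + t * ℓ) = if -chargeQuot ℓ lam i ≤ t then -1 else 1 := by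
  change (if -chargeQuot ℓ lam ((i + t * ℓ) % ℓ) ≤ (i + t * ℓ) / ℓ then -1 else 1) = _
  rw [add_mul_emod hi, add_mul_ediv hi]

lemma isMayaFun_coreMaya (hℓ : 1 ≤ ℓ) (lam : YPartition) : IsMayaFun (coreMaya ℓ lam) := by
  obtain ⟨C, hC⟩ := Finset.exists_le ((Finset.range ℓ).image fun i : ℕ => |chargeQuot ℓ lam i|)
  have hbound : ∀ j : ℤ, |chargeQuot ℓ lam (j % ℓ)| ≤ C := fun j => by
    obtain ⟨i, hi, t, rfl⟩ := exists_eq_add_mul hℓ j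
    rw [add_mul_emod hi]
    exact hC _ (Finset.mem_image_of_mem _ (Finset.mem_range.mpr hi))
  have hℓ' : (0 : ℤ) < ℓ := by omega
  refine ⟨fun j => by unfold coreMaya; split_ifs <;> simp, ⟨C * ℓ, fun j hj => ?_⟩,
    ⟨-(C + 1) * ℓ - 1, fun j hj => ?_⟩⟩
  · have := (Int.le_ediv_iff_mul_le hℓ').mpr hj
    have := abs_le.mp (hbound j)
    exact if_pos (by change -chargeQuot ℓ lam (j % ℓ) ≤ j / ℓ; omega)
  · have := (Int.ediv_lt_iff_lt_mul hℓ').mpr (show j < -(C + 1) * ℓ by omega)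
    have := abs_le.mp (hbound j)
    exact if_neg (by change ¬ -chargeQuot ℓ lam (j % ℓ) ≤ j / ℓ; omega)

lemma chargeFun_coreMaya (hℓ : 1 ≤ ℓ) (lam : YPartition) : chargeFun (coreMaya ℓ lam) = 0 := by
  rw [(isMayaFun_coreMaya hℓ lam).chargeFun_eq_sum hℓ, ← sum_chargeQuot hℓ lam]
  refine Finset.sum_congr rfl fun i hi => ?_
  simp only [coreMaya_add_mul lam (Finset.mem_range.mp hi), chargeFun_step, neg_neg]

lemma mayaFun_coreOf (hℓ : 1 ≤ ℓ) (lam : YPartition) : mayaFun (coreOf ℓ lam) = coreMaya ℓ lam :=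
  mayaFun_partitionOfMaya (isMayaFun_coreMaya hℓ lam) (chargeFun_coreMaya hℓ lam)

lemma chargeQuot_eq_of_coreOf_eq (hℓ : 1 ≤ ℓ) {mu nu : YPartition} (h : coreOf ℓ mu = coreOf ℓ nu)
    {i : ℕ} (hi : i < ℓ) : chargeQuot ℓ mu i = chargeQuot ℓ nu i := by
  have key : ∀ t : ℤ, -chargeQuot ℓ mu i ≤ t ↔ -chargeQuot ℓ nu i ≤ t := fun t => by
    have := congrFun (congrArg mayaFun h) (i + t * ℓ)
    rw [mayaFun_coreOf hℓ, mayaFun_coreOf hℓ, coreMaya_add_mul mu hi,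
      coreMaya_add_mul nu hi] at this
    split_ifs at this <;> omega
  have h1 := (key _).mpr le_rfl
  have h2 := (key _).mp le_rfl
  omega

def IsInversion (ℓ : ℕ) (f : ℤ → ℤ) (j j' : ℤ) : Prop :=
  f j = -1 ∧ f j' = 1 ∧ j < j' ∧ (ℓ : ℤ) ∣ j' - j

lemma not_isInversion_coreOf (hℓ : 1 ≤ ℓ) (lam : YPartition) (j j' : ℤ) :
    ¬ IsInversion ℓ (mayaFun (coreOf ℓ lam)) j j' := by
  rintro ⟨hj, hj', hlt, m, hm⟩
  obtain ⟨i, hi, t, rfl⟩ := exists_eq_add_mul hℓ j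
  have hj'eq : j' = i + (t + m) * ℓ := by linarith
  have hm0 : 0 < m := by nlinarith
  rw [mayaFun_coreOf hℓ, coreMaya_add_mul lam hi] at hj
  rw [hj'eq, mayaFun_coreOf hℓ, coreMaya_add_mul lam hi] at hj'
  split_ifs at hj hj'
  omega

end Core

section RowStep

lemma mem_range_hole_iff {π : YPartition} {r : ℕ} (hr : ∀ b, r ≤ b → π.part b = 0) (t : ℤ) :
    t ∈ Set.range (hole π) ↔ (∃ b < r, hole π b = t) ∨ r ≤ t := by
  constructor
  · rintro ⟨b, rfl⟩
    by_cases hb : b < r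
    · exact Or.inl ⟨b, hb, rfl⟩
    · right
      rw [hole, hr b (not_lt.mp hb)]
      omega
  · rintro (⟨b, -, rfl⟩ | ht)
    · exact ⟨b, rfl⟩
    · exact ⟨t.toNat, by rw [hole, hr _ (by omega)]; omega⟩

lemma mem_range_hole_of_part_eq_addRowParts {π π' : YPartition} {k r : ℕ}
    (h : π'.part = addRowParts k r π.part) (t : ℤ) :
    t ∈ Set.range (hole π') ↔ (∃ b < r, hole π b = t) ∨ t = r - k ∨ r < t := by
  have hr' : ∀ b, r + 1 ≤ b → π'.part b = 0 := fun b hb => by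
    simp only [h, addRowParts]
    split_ifs <;> omega
  have hπ' : ∀ b, hole π' b = if b < r then hole π b else if b = r then r - k else b := by
    intro b
    simp only [hole, h, addRowParts]
    split_ifs <;> simp_all
  rw [mem_range_hole_iff hr']
  constructor
  · rintro (⟨b, hb, rfl⟩ | ht)
    · rw [hπ' b]
      split_ifs with h1 h2
      · exact Or.inl ⟨b, h1, rfl⟩
      · exact Or.inr (Or.inl rfl)
      · omega
    · omega
  · rintro (⟨b, hb, rfl⟩ | rfl | ht)
    · exact Or.inl ⟨b, by omega, by rw [hπ' b, if_pos hb]⟩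
    · exact Or.inl ⟨r, by omega, by rw [hπ' r, if_neg (lt_irrefl r), if_pos rfl]⟩
    · omega

lemma mayaFun_of_part_eq_addRowParts {π π' : YPartition} {k r : ℕ} (hk : 1 ≤ k)
    (hr : ∀ b, r ≤ b → π.part b = 0) (hshort : ∀ b < r, k ≤ π.part b)
    (h : π'.part = addRowParts k r π.part) :
    mayaFun π (r - k) = 1 ∧ mayaFun π' (r - k) = -1 ∧ mayaFun π' r = 1 ∧
      (∀ t : ℤ, r - k < t → t < r → mayaFun π t = 1) ∧
      ∀ t : ℤ, t ≠ r - k → t ≠ r → mayaFun π' t = mayaFun π t := by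
  have hlow : ∀ b < r, hole π b < r - k := fun b hb => by
    have := hshort b hb
    rw [hole]
    omega
  have hmem := mem_range_hole_iff hr
  have hmem' := mem_range_hole_of_part_eq_addRowParts h
  refine ⟨(mayaFun_eq_one_iff π _).mpr ?_, (mayaFun_eq_neg_one_iff π' _).mpr ?_,
    (mayaFun_eq_one_iff π' _).mpr ?_, fun t ht₁ ht₂ => (mayaFun_eq_one_iff π _).mpr ?_,
    fun t ht₁ ht₂ => mayaFun_eq_of_mem_range_hole_iff ?_⟩
  · rw [hmem]
    rintro (⟨b, hb, hbt⟩ | ht)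
    · exact absurd (hlow b hb) (by omega)
    · omega
  · exact (hmem' _).mpr (Or.inr (Or.inl rfl))
  · rw [hmem']
    rintro (⟨b, hb, hbt⟩ | ht | ht)
    · exact absurd (hlow b hb) (by omega)
    · omega
    · omega
  · rw [hmem]
    rintro (⟨b, hb, hbt⟩ | ht)
    · exact absurd (hlow b hb) (by omega)
    · omega
  · rw [hmem, hmem', show (t = r - k ∨ (r : ℤ) < t) ↔ (r : ℤ) ≤ t by omega]

variable {ℓ : ℕ}

lemma IsRowStep.exists_flip {nu mu : YPartition} {i k : ℕ} (hs : IsRowStep ℓ nu mu i k) :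
    ∃ p : ℤ, mayaFun nu p = 1 ∧ mayaFun mu p = -1 ∧ mayaFun mu (p + k * ℓ) = 1 ∧
      (∀ m : ℤ, 0 < m → m < k → mayaFun nu (p + m * ℓ) = 1) ∧
      ∀ j, j ≠ p → j ≠ p + k * ℓ → mayaFun mu j = mayaFun nu j := by
  obtain ⟨hi, hk, hshort, hcore, hother, hparts⟩ := hs
  have hℓ : 1 ≤ ℓ := by omega
  set π := quotComp ℓ nu i
  set r := numRows π
  set c := chargeQuot ℓ nu i
  have hrows := lt_numRows_iff π
  obtain ⟨h1, h2, h3, hmid, hagree⟩ := mayaFun_of_part_eq_addRowParts hk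
    (fun b hb => Nat.eq_zero_of_not_pos (mt (hrows b).mpr (by omega)))
    (fun b hb => hshort b ((hrows b).mp hb)) hparts
  have hnu : ∀ t, mayaFun nu (i + (t - c) * ℓ) = mayaFun π t := fun t => by
    rw [mayaFun_add_mul hℓ, sub_add_cancel]
  have hmu : ∀ t, mayaFun mu (i + (t - c) * ℓ) = mayaFun (quotComp ℓ mu i) t := fun t => by
    rw [mayaFun_add_mul hℓ, chargeQuot_eq_of_coreOf_eq hℓ hcore hi, sub_add_cancel]
  refine ⟨i + (r - k - c) * ℓ, by rw [hnu]; exact h1, by rw [hmu]; exact h2, ?_, ?_, ?_⟩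
  · rw [show (i : ℤ) + (r - k - c) * ℓ + k * ℓ = i + (r - c) * ℓ by ring, hmu]
    exact h3
  · intro m hm0 hmk
    rw [show (i : ℤ) + (r - k - c) * ℓ + m * ℓ = i + ((r - k + m) - c) * ℓ by ring, hnu]
    exact hmid _ (by omega) (by omega)
  · intro j hjp hjq
    obtain ⟨i', hi', s, rfl⟩ := exists_eq_add_mul hℓ j
    by_cases hii : i' = i
    · subst hii
      rw [show (i' : ℤ) + s * ℓ = i' + ((s + c) - c) * ℓ by ring, hnu, hmu]
      refine hagree _ (fun h => hjp ?_) (fun h => hjq ?_)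
      · rw [show s = r - k - c by omega]
      · rw [show s = r - c by omega]
        ring
    · rw [mayaFun_add_mul hℓ, mayaFun_add_mul hℓ, hother i' hi' hii,
        chargeQuot_eq_of_coreOf_eq hℓ hcore hi']

lemma hole_eq_of_mayaFun_eq {mu nu : YPartition} {T : ℤ}
    (h : ∀ j < T, mayaFun mu j = mayaFun nu j) {b : ℕ} (hb : hole mu b < T) :
    hole nu b = hole mu b := by
  have hcnt : ∀ S ≤ T, negCnt (mayaFun mu) S = negCnt (mayaFun nu) S := fun S hS => by
    unfold negCnt
    congr 1
    ext j
    simp only [Set.mem_ofPred_eq]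
    exact and_congr_right fun hj => by rw [h j (by omega)]
  have hiff : ∀ S ≤ T, hole mu b < S ↔ hole nu b < S := fun S hS => by
    rw [← lt_negCnt_iff (strictMono_hole mu) (mayaFun_eq_neg_one_iff mu),
      ← lt_negCnt_iff (strictMono_hole nu) (mayaFun_eq_neg_one_iff nu), hcnt S hS]
  have h1 := (hiff (hole mu b + 1) (by omega)).mp (by omega)
  have h2 := mt (hiff (hole mu b) hb.le).mpr (lt_irrefl _)
  omega

lemma exists_minContentNode {nu mu : YPartition} {p : ℤ} (hnu : mayaFun nu p = 1)
    (hmu : mayaFun mu p = -1) (hagree : ∀ j < p, mayaFun mu j = mayaFun nu j) :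
    ∃ x, IsMinContentNode nu mu x ∧ x.2 - x.1 = p + 1 := by
  obtain ⟨b, hb⟩ := (mayaFun_eq_neg_one_iff mu p).mp hmu
  have hrow : ∀ B, hole mu B < p → nu.part B = mu.part B := fun B hB => by
    have := hole_eq_of_mayaFun_eq hagree hB
    simp only [hole] at this
    omega
  have hlt : nu.part b < mu.part b := by
    have hne : hole nu b ≠ p := fun h => (mayaFun_eq_one_iff nu p).mp hnu ⟨b, h⟩
    have : ¬ hole nu b < p := fun h =>
      hne (hb ▸ hole_eq_of_mayaFun_eq (fun j hj => (hagree j hj).symm) h).symm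
    simp only [hole] at hb hne this
    omega
  refine ⟨(mu.part b, b + 1), ⟨⟨⟨by omega, by omega, by simp⟩, fun ⟨_, _, h⟩ => ?_⟩, ?_⟩, ?_⟩
  · simp only [add_sub_cancel_right, Int.toNat_natCast] at h
    omega
  · rintro ⟨a, y⟩ ⟨⟨ha, hy, hay⟩, hnot⟩
    simp only [Partition.memYD, not_and, not_le] at hay hnot ⊢
    have hnot := hnot ha hy
    have : p ≤ hole mu (y - 1).toNat := le_of_not_gt fun h => by
      have := hrow _ h
      omega
    simp only [hole] at this hb
    omega
  · simp only [hole] at hb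
    omega

lemma IsMinContentNode.content_eq {nu mu : YPartition} {x y : ℤ × ℤ}
    (hx : IsMinContentNode nu mu x) (hy : IsMinContentNode nu mu y) :
    x.2 - x.1 = y.2 - y.1 :=
  le_antisymm (hx.2 y hy.1) (hy.2 x hx.1)

lemma IsRowStep.exists_minContentNode {nu mu : YPartition} {i k : ℕ}
    (hs : IsRowStep ℓ nu mu i k) :
    ∃ x, IsMinContentNode nu mu x ∧ ∀ j j', IsInversion ℓ (mayaFun mu) j j' →
      j < x.2 - x.1 ∨ IsInversion ℓ (mayaFun nu) j j' := by
  have hℓ : 1 ≤ ℓ := by have := hs.1; omega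
  have hk : 1 ≤ k := hs.2.1
  have hkℓ : (0 : ℤ) < k * ℓ := by positivity
  obtain ⟨p, h1, h2, h3, hmid, hagree⟩ := hs.exists_flip
  obtain ⟨x, hx, hcx⟩ :=
    Wreath.exists_minContentNode h1 h2 fun j hj => hagree j (by omega) (by omega)
  refine ⟨x, hx, fun j j' ⟨hj, hj', hlt, hdvd⟩ => ?_⟩
  rw [hcx]
  by_cases hjp : j ≤ p
  · exact Or.inl (by omega)
  have hjq : j ≠ p + k * ℓ := fun h => by rw [h, h3] at hj; norm_num at hj
  have hj'p : j' ≠ p := fun h => by rw [h, h2] at hj'; norm_num at hj'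
  have hnj : mayaFun nu j = -1 := by rw [← hagree j (by omega) hjq, hj]
  by_cases hj'q : j' = p + k * ℓ
  · obtain ⟨n, hn⟩ := hdvd
    have hn0 : 0 < n := by nlinarith
    have hkn : 0 < (k : ℤ) - n := by nlinarith
    have := hmid (k - n) hkn (by omega)
    rw [show p + (k - n) * ℓ = j by linarith] at this
    rw [hnj] at this
    norm_num at this
  · exact Or.inr ⟨hnj, by rw [← hagree j' hj'p hj'q, hj'], hlt, hdvd⟩

end RowStep

lemma lt_content_of_isInversion {ℓ N : ℕ} {seq : ℕ → YPartition}
    (h0 : ∀ j j', ¬ IsInversion ℓ (mayaFun (seq 0)) j j')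
    (hstep : ∀ t < N, ∃ i k, IsRowStep ℓ (seq t) (seq (t + 1)) i k) (hord : RightToLeft N seq)
    (n : ℕ) (hn : n + 1 ≤ N) {x : ℤ × ℤ} (hx : IsMinContentNode (seq n) (seq (n + 1)) x)
    {j j' : ℤ} (hinv : IsInversion ℓ (mayaFun (seq (n + 1))) j j') : j < x.2 - x.1 := by
  induction n generalizing x with
  | zero =>
    obtain ⟨i, k, hs⟩ := hstep 0 (by omega)
    obtain ⟨x₀, hx₀, hdich⟩ := hs.exists_minContentNode
    rw [hx.content_eq hx₀]
    exact (hdich j j' hinv).resolve_right (h0 j j')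
  | succ n ih =>
    obtain ⟨i, k, hs⟩ := hstep (n + 1) hn
    obtain ⟨x₀, hx₀, hdich⟩ := hs.exists_minContentNode
    obtain ⟨i', k', hs'⟩ := hstep n (by omega)
    obtain ⟨x', hx', -⟩ := hs'.exists_minContentNode
    rw [hx.content_eq hx₀]
    refine (hdich j j' hinv).elim id fun hinv' => ?_
    have := hord (n + 1) (n + 2) (by omega) (by omega) hn x' x₀ hx' hx₀
    have := ih (by omega) hx' hinv'
    omega

end Wreath

theorem vertical_propagation_general (ℓ : ℕ) (lam : YPartition)
    (N : ℕ) (seq : ℕ → YPartition)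
    (hseq : IsRowSeq ℓ lam N seq) (hord : RightToLeft N seq) (hN : 1 ≤ N)
    (x : ℤ × ℤ) (hx : IsMinContentNode (seq (N - 1)) (seq N) x) :
    ∀ j : ℤ, x.2 - x.1 ≤ j → mayaFun lam j = -1 →
      ∀ j' : ℤ, j < j' → (ℓ : ℤ) ∣ (j' - j) → mayaFun lam j' = -1 := by
  intro j hcj hj j' hlt hdvd
  obtain ⟨hs0, hsN, hstep⟩ := hseq
  obtain ⟨i, k, hs⟩ := hstep 0 hN
  have hcore : ∀ j j', ¬ IsInversion ℓ (mayaFun (seq 0)) j j' :=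
    hs0 ▸ not_isInversion_coreOf (by have := hs.1; omega) lam
  obtain ⟨n, rfl⟩ : ∃ n, N = n + 1 := ⟨N - 1, by omega⟩
  refine (mayaFun_eq_one_or_neg_one lam j').resolve_left fun hj' => ?_
  have := lt_content_of_isInversion hcore hstep hord n le_rfl hx ⟨hsN ▸ hj, hsN ▸ hj', hlt, hdvd⟩
  omega

theorem vertical_propagation (ℓ : ℕ) (hℓ : 1 ≤ ℓ) (lam : YPartition)
    (N : ℕ) (seq : ℕ → YPartition)
    (hseq : IsRowSeq ℓ lam N seq) (hord : RightToLeft N seq) (hN : 1 ≤ N)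
    (x : ℤ × ℤ) (hx : IsMinContentNode (seq (N - 1)) (seq N) x) :
    ∀ j : ℤ, x.2 - x.1 ≤ j → mayaFun lam j = -1 →
      ∀ j' : ℤ, j < j' → (ℓ : ℤ) ∣ (j' - j) → mayaFun lam j' = -1 :=
  vertical_propagation_general ℓ lam N seq hseq hord hN x hx
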